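/- arXiv:1607.04818 — 5 statements merged into one kernel-verified Lean document; each statement's English description precedes it below -/
import Mathlib

section
/- Let X ⊆ R^n be a nonempty closed convex set, f : R^n → R be C^1 with L_f-Lipschitz gradient on X, and g : R^n → R be convex. Fix y ∈ X and define x̂(y) = argmin_{x ∈ X} { f̃(x; y) + g(x) }, where f̃(·; y) is a C^1, c-strongly convex function on X satisfying ∇f̃(y; y) = ∇f(y). Then (x̂(y) - y)^T ∇f(y) + g(x̂(y)) - g(y) ≤ -c ||x̂(y) - y||_2^2. -/
open RealInnerProductSpace

theorem best_response_optimality_general {n : ℕ} (X : Set (EuclideanSpace ℝ (Fin n)))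
    (f ftil g : EuclideanSpace ℝ (Fin n) → ℝ) (c : ℝ)
    (hsc : ∀ a ∈ X, ∀ b ∈ X,
      ftil a + ⟪gradient ftil a, b - a⟫ + c * ‖b - a‖^2 ≤ ftil b)
    (y : EuclideanSpace ℝ (Fin n)) (hy : y ∈ X)
    (hgrad : gradient ftil y = gradient f y)
    (xhat : EuclideanSpace ℝ (Fin n)) (hxhatX : xhat ∈ X)
    (hmin : ∀ x ∈ X, ftil xhat + g xhat ≤ ftil x + g x) :
    ⟪xhat - y, gradient f y⟫ + g xhat - g y ≤ -c * ‖xhat - y‖^2 := by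
  have hlower : ftil y + ⟪xhat - y, gradient f y⟫ + c * ‖xhat - y‖^2 ≤ ftil xhat := by
    simpa only [hgrad, real_inner_comm] using hsc y hy xhat hxhatX
  have hbest : ftil xhat + g xhat ≤ ftil y + g y := hmin y hy
  linarith

/-- Best-response optimality (Proposition 2(a)). -/
theorem best_response_optimality {n : ℕ} (X : Set (EuclideanSpace ℝ (Fin n)))
    (hXne : X.Nonempty) (hXcl : IsClosed X) (hXcv : Convex ℝ X)
    (f ftil g : EuclideanSpace ℝ (Fin n) → ℝ) (L_f c : ℝ) (hc : 0 < c)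
    (hf : ContDiff ℝ 1 f)
    (hlip : LipschitzOnWith (Real.toNNReal L_f) (gradient f) X)
    (hg : ConvexOn ℝ Set.univ g)
    (hftil : ContDiff ℝ 1 ftil)
    (hsc : ∀ a ∈ X, ∀ b ∈ X,
      ftil a + ⟪gradient ftil a, b - a⟫ + c * ‖b - a‖^2 ≤ ftil b)
    (y : EuclideanSpace ℝ (Fin n)) (hy : y ∈ X)
    (hgrad : gradient ftil y = gradient f y)
    (xhat : EuclideanSpace ℝ (Fin n)) (hxhatX : xhat ∈ X)
    (hmin : ∀ x ∈ X, ftil xhat + g xhat ≤ ftil x + g x) :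
    ⟪xhat - y, gradient f y⟫ + g xhat - g y ≤ -c * ‖xhat - y‖^2 :=
  best_response_optimality_general X f ftil g c hsc y hy hgrad xhat hxhatX hmin
end

section
/- Let X ⊆ R^n be a nonempty closed convex set and g : R^n → R convex. Let f̃ : X × X → R be such that f̃(·; y) is C^1 and c-strongly convex on X for every y ∈ X, and ∇f̃(z; ·) is L_B-Lipschitz continuous on X uniformly in z (where ∇ denotes the gradient in the first argument). Define x̂(y) = argmin_{x ∈ X} { f̃(x; y) + g(x) }. Then for all y, z ∈ X, ||x̂(y) - x̂(z)||_2 ≤ (L_B / c) ||y - z||_2. -/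
/-!
Minimality of `x̂ y` and strong convexity give the quadratic growth
`F_y x ≥ F_y (x̂ y) + (c/2)‖x - x̂ y‖²` of `F_y = f̃(·; y) + g` on `X`. Adding this at `y` (for
`x = x̂ z`) and at `z` (for `x = x̂ y`), the `g`-terms cancel and `c‖x̂ y - x̂ z‖²` is bounded by the
increment of `x ↦ f̃(x; y) - f̃(x; z)` between `x̂ y` and `x̂ z`. By the mean value theorem this is at
most `L_B‖y - z‖‖x̂ y - x̂ z‖`, since the gradient of that difference is bounded by `L_B‖y - z‖`.
-/

open RealInnerProductSpace Set

section InnerProductSpace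

variable {E : Type*} [NormedAddCommGroup E] [InnerProductSpace ℝ E]

/-- At the midpoint `m` of `q` and `p` the linear terms `⟪G m, q - m⟫` and `⟪G m, p - m⟫` cancel, so
`F q + F p ≥ 2 F m + (c/2)‖p - q‖²` for `F = f + g`, and `F m ≥ F q`. -/
theorem quadratic_growth_of_isMinOn {s : Set E} (hs : Convex ℝ s) {f g : E → ℝ} {G : E → E}
    {c : ℝ} (hg : ConvexOn ℝ s g)
    (hf : ∀ a ∈ s, ∀ b ∈ s, f a + ⟪G a, b - a⟫ + c * ‖b - a‖ ^ 2 ≤ f b)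
    {q : E} (hq : q ∈ s) (hmin : IsMinOn (fun x => f x + g x) s q) {p : E} (hp : p ∈ s) :
    f q + g q + c / 2 * ‖p - q‖ ^ 2 ≤ f p + g p := by
  set m : E := (1 / 2 : ℝ) • q + (1 / 2 : ℝ) • p
  have hm : m ∈ s := hs hq hp (by norm_num) (by norm_num) (by norm_num)
  have hq_m : q - m = (1 / 2 : ℝ) • (q - p) := by module
  have hp_m : p - m = -((1 / 2 : ℝ) • (q - p)) := by module
  have hfq := hf m hm q hq
  have hfp := hf m hm p hp
  rw [hq_m] at hfq
  rw [hp_m, inner_neg_right, norm_neg] at hfp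
  rw [norm_smul, Real.norm_of_nonneg (by norm_num : (0 : ℝ) ≤ 1 / 2)] at hfq hfp
  have hgm : g m ≤ 1 / 2 * g q + 1 / 2 * g p := by
    simpa only [smul_eq_mul] using hg.2 hq hp (by norm_num) (by norm_num) (by norm_num)
  have hFm : f q + g q ≤ f m + g m := hmin hm
  rw [norm_sub_rev p q]
  nlinarith

variable [CompleteSpace E]

theorem gradient_sub {f h : E → ℝ} {x : E} (hf : DifferentiableAt ℝ f x)
    (hh : DifferentiableAt ℝ h x) : gradient (f - h) x = gradient f x - gradient h x := by
  refine HasGradientAt.gradient (hasGradientAt_iff_hasFDerivAt.2 ?_)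
  rw [map_sub, toDual_gradient, toDual_gradient]
  exact hf.hasFDerivAt.sub hh.hasFDerivAt

theorem Convex.norm_image_sub_le_of_norm_gradient_le {s : Set E} (hs : Convex ℝ s) {φ : E → ℝ}
    {C : ℝ} (hφ : ∀ x ∈ s, DifferentiableAt ℝ φ x) (bound : ∀ x ∈ s, ‖gradient φ x‖ ≤ C)
    {a b : E} (ha : a ∈ s) (hb : b ∈ s) : ‖φ b - φ a‖ ≤ C * ‖b - a‖ :=
  hs.norm_image_sub_le_of_norm_fderiv_le hφ
    (fun x hx => by rw [← toDual_gradient, LinearIsometryEquiv.norm_map]; exact bound x hx) ha hb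

end InnerProductSpace

theorem le_div_of_mul_sq_le_mul {c M t : ℝ} (hc : 0 < c) (hM : 0 ≤ M) (ht : 0 ≤ t)
    (h : c * t ^ 2 ≤ M * t) : t ≤ M / c := by
  rw [le_div_iff₀ hc]
  rcases ht.eq_or_lt with rfl | ht
  · simpa using hM
  · nlinarith

theorem best_response_lipschitz_general {n : ℕ} (X : Set (EuclideanSpace ℝ (Fin n)))
    (hXcv : Convex ℝ X)
    (ftil : EuclideanSpace ℝ (Fin n) → EuclideanSpace ℝ (Fin n) → ℝ)
    (g : EuclideanSpace ℝ (Fin n) → ℝ) (c L_B : ℝ) (hc : 0 < c) (hLB : 0 < L_B)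
    (hg : ConvexOn ℝ Set.univ g)
    (hC1 : ∀ y ∈ X, ContDiff ℝ 1 (fun x => ftil x y))
    (hsc : ∀ y ∈ X, ∀ a ∈ X, ∀ b ∈ X,
      ftil a y + ⟪gradient (fun x => ftil x y) a, b - a⟫ + c * ‖b - a‖^2 ≤ ftil b y)
    (hlipB : ∀ z ∈ X,
      LipschitzOnWith (Real.toNNReal L_B) (fun y => gradient (fun x => ftil x y) z) X)
    (xhat : EuclideanSpace ℝ (Fin n) → EuclideanSpace ℝ (Fin n))
    (hbr : ∀ y ∈ X, xhat y ∈ X ∧ ∀ x ∈ X, ftil (xhat y) y + g (xhat y) ≤ ftil x y + g x) :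
    ∀ y ∈ X, ∀ z ∈ X, ‖xhat y - xhat z‖ ≤ (L_B / c) * ‖y - z‖ := by
  intro y hy z hz
  obtain ⟨hay, hmin_y⟩ := hbr y hy
  obtain ⟨haz, hmin_z⟩ := hbr z hz
  have hgX : ConvexOn ℝ X g := hg.subset (subset_univ X) hXcv
  have grow_y := quadratic_growth_of_isMinOn hXcv hgX (hsc y hy) hay hmin_y haz
  have grow_z := quadratic_growth_of_isMinOn hXcv hgX (hsc z hz) haz hmin_z hay
  have hdiff : ∀ w ∈ X, ∀ x, DifferentiableAt ℝ (fun u => ftil u w) x :=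
    fun w hw x => ((hC1 w hw).differentiable one_ne_zero) x
  have cross : ‖(ftil (xhat z) y - ftil (xhat z) z) - (ftil (xhat y) y - ftil (xhat y) z)‖
      ≤ L_B * ‖y - z‖ * ‖xhat z - xhat y‖ := by
    refine hXcv.norm_image_sub_le_of_norm_gradient_le
      (fun x _ => (hdiff y hy x).sub (hdiff z hz x)) (fun x hx => ?_) hay haz
    rw [gradient_sub (hdiff y hy x) (hdiff z hz x), ← dist_eq_norm, ← dist_eq_norm]
    simpa only [Real.coe_toNNReal _ hLB.le] using (hlipB x hx).dist_le_mul y hy z hz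
  rw [Real.norm_eq_abs, norm_sub_rev (xhat z)] at cross
  rw [norm_sub_rev (xhat z)] at grow_y
  rw [div_mul_eq_mul_div]
  refine le_div_of_mul_sq_le_mul hc (by positivity) (norm_nonneg _) ?_
  nlinarith [le_abs_self
    ((ftil (xhat z) y - ftil (xhat z) z) - (ftil (xhat y) y - ftil (xhat y) z))]

/-- Lipschitz continuity of the best-response map (Proposition 2(b)). -/
theorem best_response_lipschitz {n : ℕ} (X : Set (EuclideanSpace ℝ (Fin n)))
    (hXne : X.Nonempty) (hXcl : IsClosed X) (hXcv : Convex ℝ X)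
    (ftil : EuclideanSpace ℝ (Fin n) → EuclideanSpace ℝ (Fin n) → ℝ)
    (g : EuclideanSpace ℝ (Fin n) → ℝ) (c L_B : ℝ) (hc : 0 < c) (hLB : 0 < L_B)
    (hg : ConvexOn ℝ Set.univ g)
    (hC1 : ∀ y ∈ X, ContDiff ℝ 1 (fun x => ftil x y))
    (hsc : ∀ y ∈ X, ∀ a ∈ X, ∀ b ∈ X,
      ftil a y + ⟪gradient (fun x => ftil x y) a, b - a⟫ + c * ‖b - a‖^2 ≤ ftil b y)
    (hlipB : ∀ z ∈ X,
      LipschitzOnWith (Real.toNNReal L_B) (fun y => gradient (fun x => ftil x y) z) X)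
    (xhat : EuclideanSpace ℝ (Fin n) → EuclideanSpace ℝ (Fin n))
    (hbr : ∀ y ∈ X, xhat y ∈ X ∧ ∀ x ∈ X, ftil (xhat y) y + g (xhat y) ≤ ftil x y + g x) :
    ∀ y ∈ X, ∀ z ∈ X, ‖xhat y - xhat z‖ ≤ (L_B / c) * ‖y - z‖ :=
  best_response_lipschitz_general X hXcv ftil g c L_B hc hLB hg hC1 hsc hlipB xhat hbr
end

section
/- Let X ⊆ R^n be a nonempty closed convex set, f : R^n → R be C^1, and g : R^n → R convex. Let f̃(·; y) be C^1 and strongly convex on X with ∇f̃(y; y) = ∇f(y) for all y ∈ X, and define x̂(y) = argmin_{x ∈ X} { f̃(x; y) + g(x) }. Then a point x̄ ∈ X is a fixed point of x̂ (i.e., x̂(x̄) = x̄) if and only if x̄ is a stationary point of min_{x ∈ X} f(x) + g(x), i.e., ∇f(x̄)^T (y - x̄) + g(y) - g(x̄) ≥ 0 for all y ∈ X. -/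
/-!
At a fixed point `x̄ = x̂(x̄)`, the point `x̄` minimizes `f̃(·; x̄) + g` over `X`; since `g` is
convex, comparing `x̄` with the points of the segment towards `y` gives the first-order condition
`⟪∇f̃(x̄; x̄), y - x̄⟫ + g y - g x̄ ≥ 0`, and `∇f̃(x̄; x̄) = ∇f(x̄)`. Conversely, adding the
strong-convexity inequality at `x̄`, the optimality of `z = x̂(x̄)` against `x̄`, and stationarity
tested at `z` leaves `c ‖z - x̄‖² ≤ 0`.
-/

open RealInnerProductSpace Set

theorem IsMinOn.hasFDerivAt_add_convexOn_nonneg {E : Type*} [NormedAddCommGroup E]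
    [NormedSpace ℝ E] {s : Set E} {φ g : E → ℝ} {φ' : E →L[ℝ] ℝ} {x y : E}
    (hmin : IsMinOn (fun z => φ z + g z) s x) (hg : ConvexOn ℝ s g) (hφ : HasFDerivAt φ φ' x)
    (hx : x ∈ s) (hy : y ∈ s) :
    0 ≤ φ' (y - x) + g y - g x := by
  -- `g` is replaced by its chord on the segment, which turns the problem into a smooth one in `t`.
  set θ : ℝ → ℝ := fun t => φ (x + t • (y - x)) + t * (g y - g x)
  have hθ : HasDerivAt θ (φ' (y - x) + (g y - g x)) 0 := by
    have hline : HasDerivAt (fun t : ℝ => x + t • (y - x)) (y - x) 0 := by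
      simpa using ((hasDerivAt_id (0 : ℝ)).smul_const (y - x)).const_add x
    have hφ_line : HasFDerivAt φ φ' (x + (0 : ℝ) • (y - x)) := by simpa using hφ
    have hsum :=
      (hφ_line.comp_hasDerivAt 0 hline).add ((hasDerivAt_id (0 : ℝ)).mul_const (g y - g x))
    rwa [one_mul] at hsum
  have hθmin : IsMinOn θ (Icc 0 1) 0 := by
    refine isMinOn_iff.mpr fun t ⟨ht0, ht1⟩ => ?_
    have hpoint : x + t • (y - x) = (1 - t) • x + t • y := by module
    have hmem : x + t • (y - x) ∈ s := hpoint ▸ hg.1 hx hy (by linarith) ht0 (by ring)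
    have hchord : g (x + t • (y - x)) ≤ (1 - t) * g x + t * g y := by
      simpa only [hpoint, smul_eq_mul] using hg.2 hx hy (by linarith) ht0 (by ring)
    have hcompare := isMinOn_iff.mp hmin _ hmem
    simp only [θ, zero_smul, add_zero, zero_mul]
    linarith
  have hdir : (1 : ℝ) ∈ posTangentConeAt (Icc (0 : ℝ) 1) 0 :=
    mem_posTangentConeAt_of_segment_subset (by simp [segment_eq_Icc])
  simpa [add_sub_assoc] using
    hθmin.localize.hasFDerivWithinAt_nonneg hθ.hasFDerivAt.hasFDerivWithinAt hdir

theorem best_response_fixed_point_iff_stationary_general {n : ℕ}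
    (X : Set (EuclideanSpace ℝ (Fin n)))
    (hXcv : Convex ℝ X)
    (f : EuclideanSpace ℝ (Fin n) → ℝ)
    (g : EuclideanSpace ℝ (Fin n) → ℝ) (hg : ConvexOn ℝ Set.univ g)
    (ftil : EuclideanSpace ℝ (Fin n) → EuclideanSpace ℝ (Fin n) → ℝ) (c : ℝ) (hc : 0 < c)
    (hC1 : ∀ y ∈ X, ContDiff ℝ 1 (fun x => ftil x y))
    (hsc : ∀ y ∈ X, ∀ a ∈ X, ∀ b ∈ X,
      ftil a y + ⟪gradient (fun x => ftil x y) a, b - a⟫ + c * ‖b - a‖^2 ≤ ftil b y)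
    (hgrad : ∀ y ∈ X, gradient (fun x => ftil x y) y = gradient f y)
    (xhat : EuclideanSpace ℝ (Fin n) → EuclideanSpace ℝ (Fin n))
    (hbr : ∀ y ∈ X, xhat y ∈ X ∧ ∀ x ∈ X, ftil (xhat y) y + g (xhat y) ≤ ftil x y + g x)
    (xb : EuclideanSpace ℝ (Fin n)) (hxb : xb ∈ X) :
    xhat xb = xb ↔ ∀ y ∈ X, 0 ≤ ⟪gradient f xb, y - xb⟫ + g y - g xb := by
  obtain ⟨hxhat_mem, hxhat_min⟩ := hbr xb hxb
  constructor
  · intro hfix y hy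
    have hmin : IsMinOn (fun x => ftil x xb + g x) X xb :=
      isMinOn_iff.mpr fun x hx => by simpa only [hfix] using hxhat_min x hx
    have hgradAt : HasGradientAt (fun x => ftil x xb) (gradient f xb) xb :=
      hgrad xb hxb ▸ ((hC1 xb hxb).differentiable one_ne_zero xb).hasGradientAt
    simpa using hmin.hasFDerivAt_add_convexOn_nonneg (hg.subset (subset_univ X) hXcv)
      hgradAt.hasFDerivAt hxb hy
  · intro hstat
    have hstrong := hsc xb hxb xb hxb (xhat xb) hxhat_mem
    rw [hgrad xb hxb] at hstrong
    have hopt := hxhat_min xb hxb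
    have hstat_xhat := hstat (xhat xb) hxhat_mem
    by_contra hne
    have hpos : 0 < ‖xhat xb - xb‖ := norm_pos_iff.mpr (sub_ne_zero.mpr hne)
    linarith [mul_pos hc (pow_pos hpos 2)]

/-- Fixed-point characterization of the best-response map (Proposition 2(c)):
`x̄ ∈ X` is a fixed point of the best-response map iff it is a stationary point of
`min_{x ∈ X} f(x) + g(x)`. -/
theorem best_response_fixed_point_iff_stationary {n : ℕ}
    (X : Set (EuclideanSpace ℝ (Fin n)))
    (hXne : X.Nonempty) (hXcl : IsClosed X) (hXcv : Convex ℝ X)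
    (f : EuclideanSpace ℝ (Fin n) → ℝ) (hf : ContDiff ℝ 1 f)
    (g : EuclideanSpace ℝ (Fin n) → ℝ) (hg : ConvexOn ℝ Set.univ g)
    (ftil : EuclideanSpace ℝ (Fin n) → EuclideanSpace ℝ (Fin n) → ℝ) (c : ℝ) (hc : 0 < c)
    (hC1 : ∀ y ∈ X, ContDiff ℝ 1 (fun x => ftil x y))
    (hsc : ∀ y ∈ X, ∀ a ∈ X, ∀ b ∈ X,
      ftil a y + ⟪gradient (fun x => ftil x y) a, b - a⟫ + c * ‖b - a‖^2 ≤ ftil b y)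
    (hgrad : ∀ y ∈ X, gradient (fun x => ftil x y) y = gradient f y)
    (xhat : EuclideanSpace ℝ (Fin n) → EuclideanSpace ℝ (Fin n))
    (hbr : ∀ y ∈ X, xhat y ∈ X ∧ ∀ x ∈ X, ftil (xhat y) y + g (xhat y) ≤ ftil x y + g x)
    (xb : EuclideanSpace ℝ (Fin n)) (hxb : xb ∈ X) :
    xhat xb = xb ↔ ∀ y ∈ X, 0 ≤ ⟪gradient f xb, y - xb⟫ + g y - g xb :=
  best_response_fixed_point_iff_stationary_general X hXcv f g hg ftil c hc hC1 hsc hgrad xhat hbr xb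
    hxb
end

section
/- Let X ⊆ R^n be nonempty closed convex, f C^1 with L_f-Lipschitz gradient on X, g convex and finite on X. Fix points x, x̃ ∈ X and an index-block update: let x̂ ∈ X satisfy the best-response optimality (x̂ - x̃)^T ∇f(x̃) + g(x̂) - g(x̃) ≤ -c ||x̂ - x̃||_2^2 (with c > 0), and define x^+ = x + γ(x̂ - x) with γ ∈ (0,1], where x̃ agrees with x in the updated block (so x̂ - x = x̂ - x̃ in that block and x^+ differs from x only in that block). Then F(x^+) ≤ F(x) - γ(c - γ L_f)||x̂ - x||_2^2 + (L_f / 2)||x - x̃||_2^2, where F = f + g. -/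
/-!
The descent lemma bounds `f (x⁺)` by the linearization of `f` at `x` plus
`(L_f / 2) γ² ‖x̂ - x‖²`, and convexity of `g i0` bounds the change of the separable part by
`γ (g i0 (x̂ i0) - g i0 (x i0))`. Since `x̂ - x` is supported on block `i0`, replacing `∇f x` by the
delayed gradient `∇f x̃` in the linear term costs at most `L_f ‖x - x̃‖ ‖x̂ - x‖`, after which the
best-response inequality applies; Young's inequality splits that error into
`(L_f / 2) ‖x - x̃‖² + (L_f / 2) γ² ‖x̂ - x‖²`.
-/

open RealInnerProductSpace Set
open scoped NNReal

section Descent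

variable {E : Type*} [NormedAddCommGroup E] [InnerProductSpace ℝ E] [CompleteSpace E]

theorem DifferentiableAt.hasDerivAt_apply_add_smul {f : E → ℝ} {x d : E} {t : ℝ}
    (hf : DifferentiableAt ℝ f (x + t • d)) :
    HasDerivAt (fun s : ℝ => f (x + s • d)) ⟪gradient f (x + t • d), d⟫ t := by
  have hline : HasDerivAt (fun s : ℝ => x + s • d) d t := by
    simpa using ((hasDerivAt_id t).smul_const d).const_add x
  simpa [Function.comp_def, inner_gradient_left] using hf.hasFDerivAt.comp_hasDerivAt t hline

theorem apply_le_add_inner_gradient_add_sq_of_lipschitzOnWith {f : E → ℝ} {s : Set E}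
    (hs : Convex ℝ s) (hf : ∀ z ∈ s, DifferentiableAt ℝ f z) {L : ℝ≥0}
    (hlip : LipschitzOnWith L (gradient f) s) {x y : E} (hx : x ∈ s) (hy : y ∈ s) :
    f y ≤ f x + ⟪gradient f x, y - x⟫ + L / 2 * ‖y - x‖ ^ 2 := by
  set d := y - x
  have hseg : ∀ t ∈ Icc (0 : ℝ) 1, x + t • d ∈ s := fun t ht => hs.add_smul_sub_mem hx hy ht
  have hderiv : ∀ t ∈ Icc (0 : ℝ) 1,
      HasDerivAt (fun t : ℝ => f (x + t • d)) ⟪gradient f (x + t • d), d⟫ t :=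
    fun t ht => (hf _ (hseg t ht)).hasDerivAt_apply_add_smul
  have hbound : ∀ t ∈ Icc (0 : ℝ) 1,
      ⟪gradient f (x + t • d), d⟫ ≤ ⟪gradient f x, d⟫ + L * ‖d‖ ^ 2 * t := by
    intro t ht
    have hgrad := hlip.norm_sub_le (hseg t ht) hx
    rw [add_sub_cancel_left, norm_smul, Real.norm_of_nonneg ht.1] at hgrad
    have := real_inner_le_norm (gradient f (x + t • d) - gradient f x) d
    rw [inner_sub_left] at this
    linarith [mul_le_mul_of_nonneg_right hgrad (norm_nonneg d)]
  -- the quadratic majorant, compared with `t ↦ f (x + t • d)` through their derivatives on `[0, 1]`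
  have hB : ∀ t : ℝ, HasDerivAt (fun t => f x + t * ⟪gradient f x, d⟫ + L / 2 * ‖d‖ ^ 2 * t ^ 2)
      (⟪gradient f x, d⟫ + L * ‖d‖ ^ 2 * t) t := by
    intro t
    refine ((((hasDerivAt_id' t).mul_const ⟪gradient f x, d⟫).const_add (f x)).add
      ((hasDerivAt_pow 2 t).const_mul (L / 2 * ‖d‖ ^ 2))).congr_deriv ?_
    push_cast
    ring
  have := image_le_of_deriv_right_le_deriv_boundary (a := 0) (b := 1)
    (fun t ht => (hderiv t ht).continuousAt.continuousWithinAt)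
    (fun t ht => (hderiv t (Ico_subset_Icc_self ht)).hasDerivWithinAt) (by simp)
    (fun t _ => (hB t).continuousAt.continuousWithinAt) (fun t _ => (hB t).hasDerivWithinAt)
    (fun t ht => hbound t (Ico_subset_Icc_self ht)) (right_mem_Icc.2 zero_le_one)
  simpa [d] using this

end Descent

theorem ConvexOn.apply_add_smul_sub_le {E : Type*} [AddCommGroup E] [Module ℝ E] {s : Set E}
    {g : E → ℝ} (hg : ConvexOn ℝ s g) {a b : E} (ha : a ∈ s) (hb : b ∈ s) {t : ℝ}
    (ht₀ : 0 ≤ t) (ht₁ : t ≤ 1) : g (a + t • (b - a)) ≤ g a + t * (g b - g a) := by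
  have hcomb : a + t • (b - a) = (1 - t) • a + t • b := by module
  have hconv := hg.2 ha hb (sub_nonneg.2 ht₁) ht₀ (sub_add_cancel 1 t)
  rw [smul_eq_mul, smul_eq_mul] at hconv
  rw [hcomb]
  linarith

namespace PiLp

variable {ι : Type*} [Fintype ι] {β : ι → Type*} [∀ i, NormedAddCommGroup (β i)]
  [∀ i, InnerProductSpace ℝ (β i)] {v : PiLp 2 β} {i : ι}

theorem inner_eq_inner_apply_of_forall_ne (u : PiLp 2 β) (hv : ∀ j ≠ i, v j = 0) :
    ⟪u, v⟫ = ⟪u i, v i⟫ := by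
  rw [PiLp.inner_apply, Fintype.sum_eq_single i fun j hj => by rw [hv j hj, inner_zero_right]]

theorem norm_eq_norm_apply_of_forall_ne (hv : ∀ j ≠ i, v j = 0) : ‖v‖ = ‖v i‖ := by
  rw [norm_eq_sqrt_re_inner (𝕜 := ℝ), norm_eq_sqrt_re_inner (𝕜 := ℝ),
    inner_eq_inner_apply_of_forall_ne v hv]

end PiLp

theorem one_step_descent_general {N : ℕ} {n : Fin N → ℕ}
    (X : Set (PiLp 2 fun i : Fin N => EuclideanSpace ℝ (Fin (n i))))
    (hXcv : Convex ℝ X)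
    (f : (PiLp 2 fun i : Fin N => EuclideanSpace ℝ (Fin (n i))) → ℝ)
    (g : ∀ i : Fin N, EuclideanSpace ℝ (Fin (n i)) → ℝ)
    (L_f c γ : ℝ) (hLf : 0 ≤ L_f) (hγ0 : 0 < γ) (hγ1 : γ ≤ 1)
    (hf : ContDiff ℝ 1 f)
    (hlip : LipschitzOnWith (Real.toNNReal L_f) (gradient f) X)
    (hg : ∀ i, ConvexOn ℝ Set.univ (g i))
    (x xt xhat : PiLp 2 fun i : Fin N => EuclideanSpace ℝ (Fin (n i)))
    (hx : x ∈ X) (hxt : xt ∈ X)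
    (hplus : x + γ • (xhat - x) ∈ X)
    (i0 : Fin N)
    (hxhatsame : ∀ j, j ≠ i0 → xhat j = x j)
    (hagree : xt i0 = x i0)
    (hbr : ⟪gradient f xt i0, xhat i0 - xt i0⟫ + g i0 (xhat i0) - g i0 (xt i0)
        ≤ -c * ‖xhat i0 - xt i0‖^2) :
    f (x + γ • (xhat - x)) + ∑ i, g i ((x + γ • (xhat - x)) i)
      ≤ f x + ∑ i, g i (x i) - γ * (c - γ * L_f) * ‖xhat - x‖^2
        + (L_f / 2) * ‖x - xt‖^2 := by
  set d := xhat - x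
  have hd : ∀ j ≠ i0, d j = 0 := fun j hj => sub_eq_zero.2 (hxhatsame j hj)
  have hdi0 : d i0 = xhat i0 - xt i0 := by rw [hagree, PiLp.sub_apply]
  rw [← hdi0, ← PiLp.norm_eq_norm_apply_of_forall_ne hd, hagree] at hbr
  have hfx := apply_le_add_inner_gradient_add_sq_of_lipschitzOnWith hXcv
    (fun z _ => hf.differentiable one_ne_zero z) hlip hx hplus
  rw [add_sub_cancel_left, real_inner_smul_right, norm_smul, Real.norm_of_nonneg hγ0.le,
    Real.coe_toNNReal _ hLf] at hfx
  have hgrad := hlip.norm_sub_le hx hxt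
  rw [Real.coe_toNNReal _ hLf] at hgrad
  have hcross : ⟪gradient f x, d⟫ ≤ ⟪gradient f xt i0, d i0⟫ + L_f * ‖x - xt‖ * ‖d‖ := by
    have := real_inner_le_norm (gradient f x - gradient f xt) d
    rw [inner_sub_left, PiLp.inner_eq_inner_apply_of_forall_ne (gradient f xt) hd] at this
    linarith [mul_le_mul_of_nonneg_right hgrad (norm_nonneg d)]
  have hsum : ∑ i, g i ((x + γ • d) i) - ∑ i, g i (x i)
      = g i0 (x i0 + γ • (xhat i0 - x i0)) - g i0 (x i0) := by
    rw [← Finset.sum_sub_distrib, Fintype.sum_eq_single i0 fun j hj => by simp [hd j hj],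
      PiLp.add_apply, PiLp.smul_apply, PiLp.sub_apply]
  have hgx := (hg i0).apply_add_smul_sub_le (mem_univ (x i0)) (mem_univ (xhat i0)) hγ0.le hγ1
  have hyoung : 0 ≤ L_f * (‖x - xt‖ - γ * ‖d‖) ^ 2 := by positivity
  linarith [mul_le_mul_of_nonneg_left hcross hγ0.le, mul_le_mul_of_nonneg_left hbr hγ0.le]

/-- One-step descent inequality with delayed information (inequality (14)):
`F(x⁺) ≤ F(x) - γ(c - γ L_f)‖x̂ - x‖² + (L_f/2)‖x - x̃‖²` where `F = f + Σᵢ gᵢ`,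
`x⁺ = x + γ(x̂ - x)`, `x̂` differs from `x` only in the updated block `i0`, the delayed
point `x̃` agrees with `x` in block `i0`, and `x̂` satisfies the best-response optimality
with constant `c` relative to `x̃`. -/
theorem one_step_descent {N : ℕ} {n : Fin N → ℕ}
    (X : Set (PiLp 2 fun i : Fin N => EuclideanSpace ℝ (Fin (n i))))
    (hXne : X.Nonempty) (hXcl : IsClosed X) (hXcv : Convex ℝ X)
    (f : (PiLp 2 fun i : Fin N => EuclideanSpace ℝ (Fin (n i))) → ℝ)
    (g : ∀ i : Fin N, EuclideanSpace ℝ (Fin (n i)) → ℝ)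
    (L_f c γ : ℝ) (hLf : 0 ≤ L_f) (hc : 0 < c) (hγ0 : 0 < γ) (hγ1 : γ ≤ 1)
    (hf : ContDiff ℝ 1 f)
    (hlip : LipschitzOnWith (Real.toNNReal L_f) (gradient f) X)
    (hg : ∀ i, ConvexOn ℝ Set.univ (g i))
    (x xt xhat : PiLp 2 fun i : Fin N => EuclideanSpace ℝ (Fin (n i)))
    (hx : x ∈ X) (hxt : xt ∈ X) (hxhat : xhat ∈ X)
    (hplus : x + γ • (xhat - x) ∈ X)
    (i0 : Fin N)
    (hxhatsame : ∀ j, j ≠ i0 → xhat j = x j)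
    (hagree : xt i0 = x i0)
    (hbr : ⟪gradient f xt i0, xhat i0 - xt i0⟫ + g i0 (xhat i0) - g i0 (xt i0)
        ≤ -c * ‖xhat i0 - xt i0‖^2) :
    f (x + γ • (xhat - x)) + ∑ i, g i ((x + γ • (xhat - x)) i)
      ≤ f x + ∑ i, g i (x i) - γ * (c - γ * L_f) * ‖xhat - x‖^2
        + (L_f / 2) * ‖x - xt‖^2 :=
  one_step_descent_general X hXcv f g L_f c γ hLf hγ0 hγ1 hf hlip hg x xt xhat hx hxt hplus i0
    hxhatsame hagree hbr
end

section
/- Under the setting of the one-step descent inequality: let F = f + g with ∇f L_f-Lipschitz on convex X, define the Lyapunov function F̃(x^k, ..., x^{k-δ}) = F(x^k) + (δ L_f / 2) Σ_{l=k-δ}^{k-1} (l - (k-1) + δ)||x^{l+1} - x^l||_2^2 (with x^l = x^0 for l < 0). Suppose x^{k+1} = x^k + γ(x̂^k - x^k) differs from x^k only in one block, where x̂^k satisfies the best-response optimality with constant c relative to the delayed point x̃^k, and the delay in the updated block is zero and all delays are at most δ. Then F̃(x^{k+1}, ..., x^{k+1-δ}) ≤ F̃(x^k, ..., x^{k-δ})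 - γ(c - γ(L_f + δ^2 L_f / 2))||x̂^k - x^k||_2^2. -/
/-!
The one-step descent inequality bounds `F(x^{k+1})` by `F(x^k) - γ(c - γ L_f)‖x̂ - x^k‖²` plus
the error `(L_f/2)‖x^k - x̃^k‖²` caused by evaluating the gradient at the delayed point. Telescoping
and Cauchy–Schwarz bound this error by `(δ L_f/2) Σ_{l=k-δ}^{k-1} ‖x^{l+1} - x^l‖²`. The weights of
the Lyapunov tail are chosen so that shifting the window by one step releases exactly this sum,
at the price of `δ · (δ L_f/2) γ² ‖x̂ - x^k‖²` for the newest step.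
-/

open RealInnerProductSpace Finset
open scoped NNReal

theorem Convex.le_add_inner_gradient_add_sq {E : Type*} [NormedAddCommGroup E]
    [InnerProductSpace ℝ E] [CompleteSpace E] {s : Set E} (hs : Convex ℝ s) {f : E → ℝ}
    (hf : Differentiable ℝ f) {L : ℝ≥0} (hlip : LipschitzOnWith L (gradient f) s) {a b : E}
    (ha : a ∈ s) (hb : b ∈ s) :
    f b ≤ f a + ⟪gradient f a, b - a⟫ + L / 2 * ‖b - a‖ ^ 2 := by
  set v := b - a
  have hφ : ∀ t : ℝ, HasDerivAt (fun t => f (a + t • v) - t * ⟪gradient f a, v⟫)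
      (⟪gradient f (a + t • v), v⟫ - ⟪gradient f a, v⟫) t := by
    intro t
    have hline : HasDerivAt (fun t : ℝ => a + t • v) v t := by
      simpa using ((hasDerivAt_id t).smul_const v).const_add a
    have hcomp := (hf (a + t • v)).hasFDerivAt.comp_hasDerivAt t hline
    rw [← inner_gradient_left] at hcomp
    exact hcomp.sub (hasDerivAt_mul_const _)
  have hB : ∀ t : ℝ, HasDerivAt (fun t => f a + L / 2 * t ^ 2 * ‖v‖ ^ 2) (L * t * ‖v‖ ^ 2) t := by
    intro t
    refine ((((hasDerivAt_pow 2 t).const_mul (L / 2 : ℝ)).mul_const (‖v‖ ^ 2)).const_add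
      (f a)).congr_deriv ?_
    simp only [Nat.cast_ofNat, Nat.add_one_sub_one, pow_one]
    ring
  have hbound : ∀ t ∈ Set.Ico (0 : ℝ) 1,
      ⟪gradient f (a + t • v), v⟫ - ⟪gradient f a, v⟫ ≤ L * t * ‖v‖ ^ 2 := by
    intro t ht
    have hmem : a + t • v ∈ s := hs.add_smul_sub_mem ha hb ⟨ht.1, ht.2.le⟩
    have hgrad := hlip.dist_le_mul _ hmem _ ha
    rw [dist_eq_norm, dist_eq_norm, add_sub_cancel_left, norm_smul, Real.norm_of_nonneg ht.1]
      at hgrad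
    calc ⟪gradient f (a + t • v), v⟫ - ⟪gradient f a, v⟫
        = ⟪gradient f (a + t • v) - gradient f a, v⟫ := (inner_sub_left _ _ _).symm
      _ ≤ ‖gradient f (a + t • v) - gradient f a‖ * ‖v‖ := real_inner_le_norm _ _
      _ ≤ L * (t * ‖v‖) * ‖v‖ := by gcongr
      _ = L * t * ‖v‖ ^ 2 := by ring
  have key := image_le_of_deriv_right_le_deriv_boundary
    (fun t _ => (hφ t).continuousAt.continuousWithinAt) (fun t _ => (hφ t).hasDerivWithinAt)
    (by simp) (fun t _ => (hB t).continuousAt.continuousWithinAt)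
    (fun t _ => (hB t).hasDerivWithinAt) hbound (Set.right_mem_Icc.2 zero_le_one)
  simp only [one_smul, one_mul, one_pow, mul_one, v, add_sub_cancel] at key
  linarith

theorem Convex.le_add_inner_gradient_at_add_sq {E : Type*} [NormedAddCommGroup E]
    [InnerProductSpace ℝ E] [CompleteSpace E] {s : Set E} (hs : Convex ℝ s) {f : E → ℝ}
    (hf : Differentiable ℝ f) {L : ℝ≥0} (hlip : LipschitzOnWith L (gradient f) s) {a b z : E}
    (ha : a ∈ s) (hb : b ∈ s) (hz : z ∈ s) :
    f b ≤ f a + ⟪gradient f z, b - a⟫ + L / 2 * ‖a - z‖ ^ 2 + L * ‖b - a‖ ^ 2 := by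
  have hgrad := hlip.dist_le_mul _ ha _ hz
  rw [dist_eq_norm, dist_eq_norm] at hgrad
  have hcross : ⟪gradient f a - gradient f z, b - a⟫ ≤ L * ‖a - z‖ * ‖b - a‖ :=
    (real_inner_le_norm _ _).trans (by gcongr)
  rw [inner_sub_left] at hcross
  have := hs.le_add_inner_gradient_add_sq hf hlip ha hb
  nlinarith [mul_nonneg L.2 (sq_nonneg (‖a - z‖ - ‖b - a‖))]

theorem PiLp.sub_eq_single_of_eq_of_ne {p : ENNReal} {ι : Type*} [DecidableEq ι] {β : ι → Type*}
    [∀ i, AddCommGroup (β i)] {u v : PiLp p β} {i : ι} (h : ∀ j ≠ i, u j = v j) :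
    u - v = PiLp.single p i (u i - v i) := by
  ext j
  by_cases hj : j = i
  · subst hj
    rw [WithLp.ofLp_sub, Pi.sub_apply, PiLp.single_eq_same]
  · rw [WithLp.ofLp_sub, Pi.sub_apply, PiLp.single_eq_of_ne p hj, h j hj, sub_self]

theorem PiLp.inner_single_right {ι : Type*} [Fintype ι] [DecidableEq ι] {β : ι → Type*}
    [∀ i, NormedAddCommGroup (β i)] [∀ i, InnerProductSpace ℝ (β i)] (w : PiLp 2 β) (i : ι)
    (a : β i) : ⟪w, PiLp.single 2 i a⟫ = ⟪w i, a⟫ := by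
  rw [PiLp.inner_apply, Fintype.sum_eq_single i fun j hj => by simp [hj]]
  simp

theorem block_update_descent {ι : Type*} [Fintype ι] {β : ι → Type*}
    [∀ i, NormedAddCommGroup (β i)] [∀ i, InnerProductSpace ℝ (β i)] [∀ i, CompleteSpace (β i)]
    {s : Set (PiLp 2 β)} (hs : Convex ℝ s) {f : PiLp 2 β → ℝ} (hf : Differentiable ℝ f)
    {L : ℝ≥0} (hlip : LipschitzOnWith L (gradient f) s) {g : ∀ i, β i → ℝ} {i : ι}
    (hg : ConvexOn ℝ Set.univ (g i)) {x x' xhat xt : PiLp 2 β} (hx : x ∈ s) (hx' : x' ∈ s)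
    (hxt : xt ∈ s) (hxhat : ∀ j ≠ i, xhat j = x j) {γ c : ℝ} (hγ0 : 0 ≤ γ) (hγ1 : γ ≤ 1)
    (hstep : x' = x + γ • (xhat - x))
    (hopt : ⟪gradient f xt i, xhat i - x i⟫ + g i (xhat i) - g i (x i)
      ≤ -c * ‖xhat i - x i‖ ^ 2) :
    f x' + ∑ j, g j (x' j)
      ≤ f x + ∑ j, g j (x j) - γ * (c - γ * L) * ‖xhat - x‖ ^ 2 + L / 2 * ‖x - xt‖ ^ 2 := by
  classical
  have hblock := PiLp.sub_eq_single_of_eq_of_ne hxhat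
  have hΔ : x' - x = γ • PiLp.single 2 i (xhat i - x i) := by
    rw [hstep, add_sub_cancel_left, hblock]
  have hnorm : ‖xhat - x‖ = ‖xhat i - x i‖ := by rw [hblock, PiLp.norm_single]
  have hf_step := hs.le_add_inner_gradient_at_add_sq hf hlip hx hx' hxt
  rw [hΔ, real_inner_smul_right, PiLp.inner_single_right, norm_smul, PiLp.norm_single,
    Real.norm_of_nonneg hγ0] at hf_step
  have hcoord : ∀ j, x' j = x j + γ • (xhat j - x j) := fun j => by simp [hstep]
  have hg_sum : ∑ j, g j (x' j) - ∑ j, g j (x j) = g i (x' i) - g i (x i) := by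
    rw [← sum_sub_distrib, Fintype.sum_eq_single i fun j hj => by simp [hcoord, hxhat j hj]]
  have hg_step : g i (x' i) ≤ (1 - γ) * g i (x i) + γ * g i (xhat i) := by
    have hi : x' i = (1 - γ) • x i + γ • xhat i := by rw [hcoord]; module
    simpa [hi] using hg.2 trivial trivial (sub_nonneg.2 hγ1) hγ0 (by ring)
  rw [hnorm]
  linarith [mul_le_mul_of_nonneg_left hopt hγ0]

theorem Int.sum_Ico_sub {M : Type*} [AddCommGroup M] (f : ℤ → M) {a b : ℤ} (hab : a ≤ b) :
    ∑ l ∈ Ico a b, (f (l + 1) - f l) = f b - f a := by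
  induction b, hab using Int.leInduction with
  | base => simp
  | succ b hab ih =>
    rw [← insert_Ico_right_eq_Ico_add_one hab, sum_insert right_notMem_Ico, ih]
    abel

theorem norm_sub_delayed_sq_le {E : Type*} [SeminormedAddCommGroup E] (y : ℤ → E) (k : ℤ)
    {d δ : ℕ} (hd : d ≤ δ) :
    ‖y k - y (k - d)‖ ^ 2 ≤ δ * ∑ l ∈ Ico (k - δ) k, ‖y (l + 1) - y l‖ ^ 2 := by
  have hcard : (#(Ico (k - d) k) : ℝ) ≤ δ := by
    rw [Int.card_Ico]; exact_mod_cast (show (k - (k - d)).toNat ≤ δ by omega)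
  calc ‖y k - y (k - d)‖ ^ 2
      ≤ (∑ l ∈ Ico (k - d) k, ‖y (l + 1) - y l‖) ^ 2 := by
        rw [← Int.sum_Ico_sub y (by omega)]
        gcongr
        exact norm_sum_le _ _
    _ ≤ #(Ico (k - d) k) * ∑ l ∈ Ico (k - d) k, ‖y (l + 1) - y l‖ ^ 2 :=
        sq_sum_le_card_mul_sum_sq
    _ ≤ δ * ∑ l ∈ Ico (k - δ) k, ‖y (l + 1) - y l‖ ^ 2 := by
        gcongr

theorem PiLp.norm_sub_delayed_sq_le {ι : Type*} [Fintype ι] {β : ι → Type*}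
    [∀ i, SeminormedAddCommGroup (β i)] (y : ℤ → PiLp 2 β) (k : ℤ) (d : ι → ℕ) {δ : ℕ}
    (hd : ∀ j, d j ≤ δ) (xt : PiLp 2 β) (hxt : ∀ j, xt j = y (k - d j) j) :
    ‖y k - xt‖ ^ 2 ≤ δ * ∑ l ∈ Ico (k - δ) k, ‖y (l + 1) - y l‖ ^ 2 := by
  simp only [PiLp.norm_sq_eq_of_L2, PiLp.sub_apply, hxt]
  rw [sum_comm, mul_sum]
  exact sum_le_sum fun j _ => _root_.norm_sub_delayed_sq_le (fun l => y l j) k (hd j)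

theorem sum_Ico_weighted_window_succ (D : ℤ → ℝ) (k : ℤ) (δ : ℕ) :
    ∑ l ∈ Ico (k + 1 - δ) (k + 1), ((l - k + δ : ℤ) : ℝ) * D l
      = ∑ l ∈ Ico (k - δ) k, ((l - (k - 1) + δ : ℤ) : ℝ) * D l
        - ∑ l ∈ Ico (k - δ) k, D l + δ * D k := by
  set h : ℤ → ℝ := fun l => ((l - k + δ : ℤ) : ℝ) * D l
  have hshift : ∑ l ∈ Ico (k + 1 - δ) (k + 1), h l = ∑ l ∈ Ico (k - δ) k, h (l + 1) := by
    rw [sum_Ico_add' h]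
    congr 2
    ring
  have hweights : ∑ l ∈ Ico (k - δ) k, h l
      = ∑ l ∈ Ico (k - δ) k, ((l - (k - 1) + δ : ℤ) : ℝ) * D l - ∑ l ∈ Ico (k - δ) k, D l := by
    rw [← sum_sub_distrib]
    refine sum_congr rfl fun l _ => ?_
    simp only [h]
    push_cast
    ring
  have htel := Int.sum_Ico_sub h (show k - δ ≤ k by omega)
  have htop : h k = δ * D k := by simp [h]
  have hbot : h (k - δ) = 0 := by simp [h]
  rw [sum_sub_distrib, htop, hbot] at htel
  linarith

theorem lyapunov_descent_general {N : ℕ} {n : Fin N → ℕ}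
    (Xi : ∀ i : Fin N, Set (EuclideanSpace ℝ (Fin (n i))))
    (hXicv : ∀ i, Convex ℝ (Xi i))
    (f : (PiLp 2 fun i : Fin N => EuclideanSpace ℝ (Fin (n i))) → ℝ)
    (g : ∀ i : Fin N, EuclideanSpace ℝ (Fin (n i)) → ℝ)
    (L_f c γ : ℝ) (δ : ℕ)
    (hLf : 0 ≤ L_f) (hγ0 : 0 < γ) (hγ1 : γ ≤ 1)
    (hf : ContDiff ℝ 1 f)
    (hlip : LipschitzOnWith (Real.toNNReal L_f) (gradient f)
      {z : PiLp 2 fun i : Fin N => EuclideanSpace ℝ (Fin (n i)) | ∀ i, z i ∈ Xi i})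
    (hg : ∀ i, ConvexOn ℝ Set.univ (g i))
    (x : ℕ → PiLp 2 fun i : Fin N => EuclideanSpace ℝ (Fin (n i)))
    (hxX : ∀ k i, x k i ∈ Xi i)
    (k : ℕ) (i0 : Fin N)
    (xhat : PiLp 2 fun i : Fin N => EuclideanSpace ℝ (Fin (n i)))
    (hxhatsame : ∀ j, j ≠ i0 → xhat j = x k j)
    (d : Fin N → ℕ) (hd : ∀ j, d j ≤ δ) (hd0 : d i0 = 0)
    (xt : PiLp 2 fun i : Fin N => EuclideanSpace ℝ (Fin (n i)))
    (hxt : ∀ j, xt j = x (k - d j) j)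
    (hstep : x (k + 1) = x k + γ • (xhat - x k)) :
    ⟪gradient f xt i0, xhat i0 - xt i0⟫ + g i0 (xhat i0) - g i0 (xt i0)
        ≤ -c * ‖xhat i0 - xt i0‖^2 →
    (f (x (k + 1)) + ∑ i, g i (x (k + 1) i))
      + ((δ : ℝ) * L_f / 2) * ∑ l ∈ Finset.Ico ((k : ℤ) + 1 - δ) ((k : ℤ) + 1),
          ((l - (k : ℤ) + δ : ℤ) : ℝ) * ‖x ((l + 1).toNat) - x (l.toNat)‖^2
      ≤ (f (x k) + ∑ i, g i (x k i))
          + ((δ : ℝ) * L_f / 2) * ∑ l ∈ Finset.Ico ((k : ℤ) - δ) (k : ℤ),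
              ((l - ((k : ℤ) - 1) + δ : ℤ) : ℝ) * ‖x ((l + 1).toNat) - x (l.toNat)‖^2
        - γ * (c - γ * (L_f + (δ : ℝ)^2 * L_f / 2)) * ‖xhat - x k‖^2 := by
  intro hopt
  have hxt0 : xt i0 = x k i0 := by rw [hxt, hd0, Nat.sub_zero]
  have hX : Convex ℝ {z : PiLp 2 fun i : Fin N => EuclideanSpace ℝ (Fin (n i)) |
      ∀ i, z i ∈ Xi i} :=
    fun u hu v hv a b ha hb hab i => by simpa using hXicv i (hu i) (hv i) ha hb hab
  have hone := block_update_descent hX (hf.differentiable one_ne_zero) hlip (hg i0) (hxX k)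
    (hxX (k + 1)) (fun i => hxt i ▸ hxX _ i) hxhatsame hγ0.le hγ1 hstep (hxt0 ▸ hopt)
  rw [Real.coe_toNNReal _ hLf] at hone
  have hdelay := PiLp.norm_sub_delayed_sq_le (fun l : ℤ => x l.toNat) k d hd xt
    fun j => by rw [hxt, show ((k : ℤ) - d j).toNat = k - d j by omega]
  have hlast : ‖x (k + 1) - x k‖ ^ 2 = γ ^ 2 * ‖xhat - x k‖ ^ 2 := by
    rw [hstep, add_sub_cancel_left, norm_smul, mul_pow, Real.norm_eq_abs, sq_abs]
  rw [sum_Ico_weighted_window_succ (fun l => ‖x ((l + 1).toNat) - x l.toNat‖ ^ 2)]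
  simp only [Int.toNat_natCast, Int.toNat_natCast_add_one, hlast] at hdelay ⊢
  linarith [mul_le_mul_of_nonneg_left hdelay (by positivity : 0 ≤ L_f / 2)]

/-- The Lyapunov descent inequality (17): with
`F̃(x^k,…,x^{k-δ}) = F(x^k) + (δ L_f / 2) Σ_{l=k-δ}^{k-1} (l-(k-1)+δ)‖x^{l+1}-x^l‖²`
(where `x^l = x^0` for `l < 0`), a block update `x^{k+1} = x^k + γ(x̂ - x^k)` based on a
best response at a delayed point `x̃` (zero delay in the updated block, all delays `≤ δ`)
satisfies `F̃(k+1) ≤ F̃(k) - γ(c - γ(L_f + δ² L_f / 2))‖x̂ - x^k‖²`. -/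
theorem lyapunov_descent {N : ℕ} {n : Fin N → ℕ}
    (Xi : ∀ i : Fin N, Set (EuclideanSpace ℝ (Fin (n i))))
    (hXine : ∀ i, (Xi i).Nonempty) (hXicl : ∀ i, IsClosed (Xi i))
    (hXicv : ∀ i, Convex ℝ (Xi i))
    (f : (PiLp 2 fun i : Fin N => EuclideanSpace ℝ (Fin (n i))) → ℝ)
    (g : ∀ i : Fin N, EuclideanSpace ℝ (Fin (n i)) → ℝ)
    (L_f c γ : ℝ) (δ : ℕ) (hδ : 1 ≤ δ)
    (hLf : 0 ≤ L_f) (hc : 0 < c) (hγ0 : 0 < γ) (hγ1 : γ ≤ 1)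
    (hf : ContDiff ℝ 1 f)
    (hlip : LipschitzOnWith (Real.toNNReal L_f) (gradient f)
      {z : PiLp 2 fun i : Fin N => EuclideanSpace ℝ (Fin (n i)) | ∀ i, z i ∈ Xi i})
    (hg : ∀ i, ConvexOn ℝ Set.univ (g i))
    (x : ℕ → PiLp 2 fun i : Fin N => EuclideanSpace ℝ (Fin (n i)))
    (hxX : ∀ k i, x k i ∈ Xi i)
    (k : ℕ) (i0 : Fin N)
    (xhat : PiLp 2 fun i : Fin N => EuclideanSpace ℝ (Fin (n i)))
    (hxhatX : ∀ i, xhat i ∈ Xi i)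
    (hxhatsame : ∀ j, j ≠ i0 → xhat j = x k j)
    (d : Fin N → ℕ) (hd : ∀ j, d j ≤ δ) (hd0 : d i0 = 0)
    (xt : PiLp 2 fun i : Fin N => EuclideanSpace ℝ (Fin (n i)))
    (hxt : ∀ j, xt j = x (k - d j) j)
    (hstep : x (k + 1) = x k + γ • (xhat - x k)) :
    ⟪gradient f xt i0, xhat i0 - xt i0⟫ + g i0 (xhat i0) - g i0 (xt i0)
        ≤ -c * ‖xhat i0 - xt i0‖^2 →
    (f (x (k + 1)) + ∑ i, g i (x (k + 1) i))
      + ((δ : ℝ) * L_f / 2) * ∑ l ∈ Finset.Ico ((k : ℤ) + 1 - δ) ((k : ℤ) + 1),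
          ((l - (k : ℤ) + δ : ℤ) : ℝ) * ‖x ((l + 1).toNat) - x (l.toNat)‖^2
      ≤ (f (x k) + ∑ i, g i (x k i))
          + ((δ : ℝ) * L_f / 2) * ∑ l ∈ Finset.Ico ((k : ℤ) - δ) (k : ℤ),
              ((l - ((k : ℤ) - 1) + δ : ℤ) : ℝ) * ‖x ((l + 1).toNat) - x (l.toNat)‖^2
        - γ * (c - γ * (L_f + (δ : ℝ)^2 * L_f / 2)) * ‖xhat - x k‖^2 :=
  lyapunov_descent_general Xi hXicv f g L_f c γ δ hLf hγ0 hγ1 hf hlip hg x hxX k i0 xhat hxhatsame d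
    hd hd0 xt hxt hstep
end
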